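/- With M, t₀ as in the setting where M(t) = δ·[A·F(t̃(t)) + B·(1 − F(t̃(t)))] + (1−δ)·[Fγ·(μ·F(t̃(t)) + (σ/√g)f(t̃(t))) + Fα·(μ·(1−F(t̃(t))) − (σ/√g)f(t̃(t)))], t̃(t) = (μ−t)√g/σ, σ > 0, g > 0, 0 < δ < 1, Fγ > Fα, the second derivative of M at t₀ = (δ/(1−δ))(B−A)/(Fγ−Fα) is strictly negative; hence t₀ is a strict local maximum of M. -/

import Mathlib

/-!
Writing `t̃ = (μ - t)√g/σ`, one has `M'(t) = (√g/σ) f(t̃) · (1 - δ)(Fγ - Fα) · (t₀ - t)`: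
the `μ F` terms of `M` cancel against the derivative of the `f` terms because `f'(x) = -x f(x)`.
Since `f > 0`, `M` is strictly increasing left of `t₀` and strictly decreasing right of it, and
`M''(t₀)` is minus the (positive) coefficient of `t₀ - t`.
-/

open MeasureTheory ProbabilityTheory Set

noncomputable def stdPDF (x : ℝ) : ℝ := (Real.sqrt (2 * Real.pi))⁻¹ * Real.exp (-x ^ 2 / 2)
noncomputable def stdCDF (x : ℝ) : ℝ := ∫ u in Set.Iic x, stdPDF u

open Filter Topology

lemma stdPDF_pos (x : ℝ) : 0 < stdPDF x := by
  unfold stdPDF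
  have : 0 < Real.sqrt (2 * Real.pi) := Real.sqrt_pos.2 (by positivity)
  positivity

lemma continuous_stdPDF : Continuous stdPDF := by
  unfold stdPDF
  fun_prop

lemma integrable_stdPDF : Integrable stdPDF := by
  refine ((integrable_exp_neg_mul_sq (by norm_num : (0 : ℝ) < 1 / 2)).const_mul
    (Real.sqrt (2 * Real.pi))⁻¹).congr (Eventually.of_forall fun x => ?_)
  unfold stdPDF
  ring_nf

lemma hasDerivAt_stdCDF (x : ℝ) : HasDerivAt stdCDF (stdPDF x) x := by
  have hsplit : ∀ y, stdCDF y = stdCDF 0 + ∫ u in (0 : ℝ)..y, stdPDF u := fun y => by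
    rw [← intervalIntegral.integral_Iic_sub_Iic integrable_stdPDF.integrableOn
      integrable_stdPDF.integrableOn]
    unfold stdCDF
    ring
  have hint : HasDerivAt (fun y => ∫ u in (0 : ℝ)..y, stdPDF u) (stdPDF x) x :=
    intervalIntegral.integral_hasDerivAt_right integrable_stdPDF.intervalIntegrable
      continuous_stdPDF.aestronglyMeasurable.stronglyMeasurableAtFilter
      continuous_stdPDF.continuousAt
  exact (hint.const_add (stdCDF 0)).congr_of_eventuallyEq (Eventually.of_forall hsplit)

lemma hasDerivAt_stdPDF (x : ℝ) : HasDerivAt stdPDF (-x * stdPDF x) x := by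
  have hexp : HasDerivAt (fun y : ℝ => -y ^ 2 / 2) (-x) x := by
    simpa using ((hasDerivAt_pow 2 x).neg.div_const 2).congr_deriv (by ring)
  have hgauss := ((Real.hasDerivAt_exp _).comp x hexp).const_mul (Real.sqrt (2 * Real.pi))⁻¹
  refine hgauss.congr_deriv ?_
  unfold stdPDF
  ring

/-- `M` as a function of the standardized threshold `t̃`, with `s` standing for `σ/√g`. -/
noncomputable def scorePayoff (δ μ s Fγ Fα A B x : ℝ) : ℝ :=
  δ * (A * stdCDF x + B * (1 - stdCDF x))
    + (1 - δ) * (Fγ * (μ * stdCDF x + s * stdPDF x) + Fα * (μ * (1 - stdCDF x) - s * stdPDF x))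

lemma hasDerivAt_scorePayoff (δ μ s Fγ Fα A B x : ℝ) :
    HasDerivAt (scorePayoff δ μ s Fγ Fα A B)
      (stdPDF x * (δ * (A - B) + (1 - δ) * (Fγ - Fα) * (μ - s * x))) x := by
  have hF := hasDerivAt_stdCDF x
  have hf := hasDerivAt_stdPDF x
  refine ((((hF.const_mul A).add ((hF.const_sub 1).const_mul B)).const_mul δ).add
    (((((hF.const_mul μ).add (hf.const_mul s)).const_mul Fγ).add
      ((((hF.const_sub 1).const_mul μ).sub (hf.const_mul s)).const_mul Fα)).const_mul
        (1 - δ))).congr_deriv ?_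
  ring

lemma hasDerivAt_scorePayoff_comp_score (δ μ σ g Fγ Fα A B t : ℝ) (hσ : σ ≠ 0) (hg : 0 < g) :
    HasDerivAt (fun t => scorePayoff δ μ (σ / Real.sqrt g) Fγ Fα A B ((μ - t) * Real.sqrt g / σ))
      (Real.sqrt g / σ * stdPDF ((μ - t) * Real.sqrt g / σ)
        * (δ * (B - A) - (1 - δ) * (Fγ - Fα) * t)) t := by
  have hs : Real.sqrt g ≠ 0 := (Real.sqrt_pos.2 hg).ne'
  have hscore : HasDerivAt (fun t => (μ - t) * Real.sqrt g / σ) (-(Real.sqrt g / σ)) t :=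
    ((((hasDerivAt_id' t).const_sub μ).mul_const (Real.sqrt g)).div_const σ).congr_deriv
      (by ring)
  refine ((hasDerivAt_scorePayoff _ _ _ _ _ _ _ _).comp t hscore).congr_deriv ?_
  field_simp
  ring

lemma eventually_lt_of_hasDerivAt_mul_sub {M w : ℝ → ℝ} {t₀ : ℝ}
    (hM : ∀ t, HasDerivAt M (w t * (t₀ - t)) t) (hw : ∀ t, 0 < w t) :
    ∀ᶠ t in 𝓝[≠] t₀, M t < M t₀ := by
  have hcont : Continuous M := continuous_iff_continuousAt.2 fun t => (hM t).continuousAt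
  have hderiv : deriv M = fun t => w t * (t₀ - t) := funext fun t => (hM t).deriv
  have hmono : StrictMonoOn M (Iic t₀) := by
    refine strictMonoOn_of_deriv_pos (convex_Iic t₀) hcont.continuousOn fun x hx => ?_
    rw [interior_Iic] at hx
    rw [hderiv]
    exact mul_pos (hw x) (sub_pos.2 hx)
  have hanti : StrictAntiOn M (Ici t₀) := by
    refine strictAntiOn_of_deriv_neg (convex_Ici t₀) hcont.continuousOn fun x hx => ?_
    rw [interior_Ici] at hx
    rw [hderiv]
    exact mul_neg_of_pos_of_neg (hw x) (sub_neg.2 hx)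
  filter_upwards [self_mem_nhdsWithin] with t ht
  rcases lt_or_gt_of_ne (ht : t ≠ t₀) with h | h
  · exact hmono h.le self_mem_Iic h
  · exact hanti self_mem_Ici h.le h

lemma deriv_mul_sub_self {w : ℝ → ℝ} {t₀ : ℝ} (hw : DifferentiableAt ℝ w t₀) :
    deriv (fun t => w t * (t₀ - t)) t₀ = -w t₀ :=
  ((hw.hasDerivAt.mul ((hasDerivAt_id' t₀).const_sub t₀)).congr_deriv (by ring)).deriv

theorem stmt5_general (μ σ g δ Fγ Fα A B : ℝ) (hσ : 0 < σ) (hg : 0 < g)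
    (hδ1 : δ < 1) (hF : Fα < Fγ) :
    let M : ℝ → ℝ := fun t =>
      δ * (A * stdCDF ((μ - t) * Real.sqrt g / σ)
           + B * (1 - stdCDF ((μ - t) * Real.sqrt g / σ)))
      + (1 - δ) * (Fγ * (μ * stdCDF ((μ - t) * Real.sqrt g / σ)
                        + (σ / Real.sqrt g) * stdPDF ((μ - t) * Real.sqrt g / σ))
                 + Fα * (μ * (1 - stdCDF ((μ - t) * Real.sqrt g / σ))
                        - (σ / Real.sqrt g) * stdPDF ((μ - t) * Real.sqrt g / σ)))
    let t₀ : ℝ := (δ / (1 - δ)) * (B - A) / (Fγ - Fα)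
    deriv (deriv M) t₀ < 0 ∧ ∀ᶠ t in nhdsWithin t₀ {t₀}ᶜ, M t < M t₀ := by
  intro M t₀
  have hK : 0 < (1 - δ) * (Fγ - Fα) := mul_pos (sub_pos.2 hδ1) (sub_pos.2 hF)
  have hKt₀ : (1 - δ) * (Fγ - Fα) * t₀ = δ * (B - A) := by
    simp only [t₀]
    field_simp [(sub_pos.2 hδ1).ne', (sub_pos.2 hF).ne']
  set w : ℝ → ℝ := fun t =>
    Real.sqrt g / σ * stdPDF ((μ - t) * Real.sqrt g / σ) * ((1 - δ) * (Fγ - Fα))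
  have hw : ∀ t, 0 < w t := fun t =>
    mul_pos (mul_pos (div_pos (Real.sqrt_pos.2 hg) hσ) (stdPDF_pos _)) hK
  have hM : ∀ t, HasDerivAt M (w t * (t₀ - t)) t := fun t => by
    refine (hasDerivAt_scorePayoff_comp_score δ μ σ g Fγ Fα A B t hσ.ne' hg).congr_deriv ?_
    rw [← hKt₀]
    ring
  have hw_diff : DifferentiableAt ℝ w t₀ := by
    have hf : DifferentiableAt ℝ (fun t => stdPDF ((μ - t) * Real.sqrt g / σ)) t₀ :=
      (hasDerivAt_stdPDF _).differentiableAt.comp t₀ (by fun_prop)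
    exact (hf.const_mul _).mul_const _
  refine ⟨?_, eventually_lt_of_hasDerivAt_mul_sub hM hw⟩
  rw [show deriv M = fun t => w t * (t₀ - t) from funext fun t => (hM t).deriv,
    deriv_mul_sub_self hw_diff]
  exact neg_neg_of_pos (hw t₀)

theorem stmt5 (μ σ g δ Fγ Fα A B : ℝ) (hσ : 0 < σ) (hg : 0 < g)
    (hδ0 : 0 < δ) (hδ1 : δ < 1) (hF : Fα < Fγ) :
    let M : ℝ → ℝ := fun t =>
      δ * (A * stdCDF ((μ - t) * Real.sqrt g / σ)
           + B * (1 - stdCDF ((μ - t) * Real.sqrt g / σ)))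
      + (1 - δ) * (Fγ * (μ * stdCDF ((μ - t) * Real.sqrt g / σ)
                        + (σ / Real.sqrt g) * stdPDF ((μ - t) * Real.sqrt g / σ))
                 + Fα * (μ * (1 - stdCDF ((μ - t) * Real.sqrt g / σ))
                        - (σ / Real.sqrt g) * stdPDF ((μ - t) * Real.sqrt g / σ)))
    let t₀ : ℝ := (δ / (1 - δ)) * (B - A) / (Fγ - Fα)
    deriv (deriv M) t₀ < 0 ∧ ∀ᶠ t in nhdsWithin t₀ {t₀}ᶜ, M t < M t₀ :=
  stmt5_general μ σ g δ Fγ Fα A B hσ hg hδ1 hF
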